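/- Let φ be a CNF instance of one-in-three 3SAT. Construct φ′ by Tovey's transformation: replace the d occurrences of each variable z with fresh variables z₁,…,z_d and add two-literal clauses (z₁ ∨ ¬z₂),…,(z_d ∨ ¬z₁); add (z ∨ ¬z) for variables occurring once. Then there is an assignment making exactly one literal true in every clause of φ′ if and only if there is an assignment making exactly one literal true in every clause of φ. (Note that a two-literal clause (a ∨ ¬b) has exactly one true literal iff a and b have the same truth value.) -/

import Mathlib

/-- A CNF formula over variables `V`. -/
abbrev CNF (V : Type) := List (List (V × Bool))

/-- One-in-three satisfaction: every clause has exactly one true literal. -/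
def OneInThree {V : Type} (σ : V → Bool) (φ : CNF V) : Prop :=
  ∀ c ∈ φ, c.countP (fun l => σ l.1 == l.2) = 1

/-- Rename the literals of one clause, giving each occurrence of a variable `z`
the fresh copy `(z, j)` where `j` counts earlier occurrences of `z`. -/
def renameClause : (ℕ → ℕ) → List (ℕ × Bool) → List ((ℕ × ℕ) × Bool) × (ℕ → ℕ)
  | cnt, [] => ([], cnt)
  | cnt, l :: ls =>
      let rest := renameClause (Function.update cnt l.1 (cnt l.1 + 1)) ls
      (((l.1, cnt l.1), l.2) :: rest.1, rest.2)

/-- Rename all clauses of a CNF formula, threading the occurrence counter. -/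
def renameCNF : (ℕ → ℕ) → CNF ℕ → CNF (ℕ × ℕ) × (ℕ → ℕ)
  | cnt, [] => ([], cnt)
  | cnt, c :: cs =>
      let rc := renameClause cnt c
      let rest := renameCNF rc.2 cs
      (rc.1 :: rest.1, rest.2)

/-- Number of occurrences of variable `z` in φ. -/
def occCount (φ : CNF ℕ) (z : ℕ) : ℕ := (φ.flatten.map Prod.fst).count z

/-- The added two-literal clauses for a variable `z` with `d` occurrences. -/
def cycleClauses (z d : ℕ) : CNF (ℕ × ℕ) :=
  if d ≤ 1 then [[((z, 0), true), ((z, 0), false)]]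
  else (List.range d).map fun j => [((z, j), true), ((z, (j + 1) % d), false)]

/-- Tovey's transformation. -/
def tovey (φ : CNF ℕ) : CNF (ℕ × ℕ) :=
  (renameCNF (fun _ => 0) φ).1 ++
    ((φ.flatten.map Prod.fst).dedup.flatMap fun z => cycleClauses z (occCount φ z))

/-!
Each renamed clause becomes the original clause once the copy index is forgotten, so an
assignment `σ` of `φ` lifts to `σ ∘ Prod.fst`, which satisfies the renamed clauses and, giving all
copies of a variable the same value, every cycle clause. Conversely, a cycle clause
`(z, j) ∨ ¬(z, j + 1)` is one-in-three satisfied exactly when both copies agree, so a solution of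
`tovey φ` is constant on the copies `(z, 0), …, (z, d - 1)` of each variable; since every copy
used by the renaming has index below `d = occCount φ z`, the solution equals
`(fun z => σ' (z, 0)) ∘ Prod.fst` on the renamed clauses.
-/

section OneInThree

variable {V W : Type}

theorem oneInThree_append {σ : V → Bool} {φ ψ : CNF V} :
    OneInThree σ (φ ++ ψ) ↔ OneInThree σ φ ∧ OneInThree σ ψ :=
  List.forall_mem_append

theorem oneInThree_flatMap {σ : V → Bool} {ι : Type} {s : List ι} {f : ι → CNF V} :
    OneInThree σ (s.flatMap f) ↔ ∀ i ∈ s, OneInThree σ (f i) :=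
  List.forall_mem_flatMap

theorem oneInThree_congr {σ₁ σ₂ : V → Bool} {φ : CNF V}
    (h : ∀ c ∈ φ, ∀ l ∈ c, σ₁ l.1 = σ₂ l.1) : OneInThree σ₁ φ ↔ OneInThree σ₂ φ := by
  refine forall₂_congr fun c hc => ?_
  rw [List.countP_congr fun l hl => by rw [h c hc l hl]]

theorem oneInThree_comp_iff {σ : W → Bool} {f : V → W} {φ : CNF V} :
    OneInThree (σ ∘ f) φ ↔ OneInThree σ (φ.map (List.map (Prod.map f id))) := by
  simp only [OneInThree, List.forall_mem_map, List.countP_map]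
  rfl

theorem countP_pair_eq_one_iff {σ : V → Bool} {a b : V} :
    [(a, true), (b, false)].countP (fun l => σ l.1 == l.2) = 1 ↔ σ a = σ b := by
  cases ha : σ a <;> cases hb : σ b <;> simp [ha, hb]

end OneInThree

theorem oneInThree_cycleClauses_iff {σ : ℕ × ℕ → Bool} {z d : ℕ} :
    OneInThree σ (cycleClauses z d) ↔ ∀ j < d, σ (z, j) = σ (z, 0) := by
  unfold cycleClauses
  split_ifs with hd
  · simp only [OneInThree, List.mem_singleton, forall_eq, countP_pair_eq_one_iff, true_iff]
    intro j hj
    obtain rfl : j = 0 := by omega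
    rfl
  · simp only [OneInThree, List.forall_mem_map, List.mem_range, countP_pair_eq_one_iff]
    constructor
    · intro h j hj
      induction j with
      | zero => rfl
      | succ j ih => rw [← ih (by omega), h j (by omega), Nat.mod_eq_of_lt hj]
    · intro h j hj
      rw [h j hj, h _ (Nat.mod_lt _ (by omega))]

theorem renameClause_snd (cnt : ℕ → ℕ) (c : List (ℕ × Bool)) (z : ℕ) :
    (renameClause cnt c).2 z = cnt z + (c.map Prod.fst).count z := by
  induction c generalizing cnt with
  | nil => simp [renameClause]
  | cons l ls ih =>
    simp only [renameClause, List.map_cons, List.count_cons, ih]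
    by_cases h : l.1 = z <;> simp [Function.update, h] <;> omega

theorem renameClause_fst_map (cnt : ℕ → ℕ) (c : List (ℕ × Bool)) :
    (renameClause cnt c).1.map (Prod.map Prod.fst id) = c := by
  induction c generalizing cnt with
  | nil => rfl
  | cons l ls ih => simp [renameClause, ih]

theorem renameCNF_fst_map (cnt : ℕ → ℕ) (φ : CNF ℕ) :
    (renameCNF cnt φ).1.map (List.map (Prod.map Prod.fst id)) = φ := by
  induction φ generalizing cnt with
  | nil => rfl
  | cons c cs ih => simp [renameCNF, ih, renameClause_fst_map]

theorem renameClause_index_lt (cnt : ℕ → ℕ) (c : List (ℕ × Bool)) :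
    ∀ l ∈ (renameClause cnt c).1, l.1.2 < cnt l.1.1 + (c.map Prod.fst).count l.1.1 := by
  induction c generalizing cnt with
  | nil => simp [renameClause]
  | cons l ls ih =>
    simp only [renameClause, List.mem_cons, forall_eq_or_imp, List.map_cons, List.count_cons]
    refine ⟨by simp, fun l' hl' => ?_⟩
    have := ih _ l' hl'
    by_cases h : l'.1.1 = l.1 <;> simp_all [Function.update] <;> omega

theorem renameCNF_index_lt (cnt : ℕ → ℕ) (φ : CNF ℕ) :
    ∀ c ∈ (renameCNF cnt φ).1, ∀ l ∈ c,
      l.1.2 < cnt l.1.1 + occCount φ l.1.1 := by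
  unfold occCount
  induction φ generalizing cnt with
  | nil => simp [renameCNF]
  | cons c cs ih =>
    simp only [renameCNF, List.mem_cons, forall_eq_or_imp, List.flatten_cons, List.map_append,
      List.count_append]
    refine ⟨fun l hl => ?_, fun c' hc' l hl => ?_⟩
    · have := renameClause_index_lt cnt c l hl
      omega
    · have := ih _ c' hc' l hl
      rw [renameClause_snd] at this
      omega

/-- Tovey's transformation preserves one-in-three satisfiability. -/
theorem tovey_one_in_three_equisat (φ : CNF ℕ) :
    (∃ σ, OneInThree σ (tovey φ)) ↔ (∃ σ, OneInThree σ φ) := by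
  have h_lift (σ : ℕ → Bool) :
      OneInThree (σ ∘ Prod.fst) (renameCNF (fun _ => 0) φ).1 ↔ OneInThree σ φ := by
    rw [oneInThree_comp_iff, renameCNF_fst_map]
  constructor
  · rintro ⟨σ', h⟩
    rw [tovey, oneInThree_append, oneInThree_flatMap] at h
    refine ⟨fun z => σ' (z, 0), (h_lift _).1 ((oneInThree_congr fun c hc l hl => ?_).1 h.1)⟩
    have hj : l.1.2 < occCount φ l.1.1 := by
      simpa only [zero_add] using renameCNF_index_lt _ φ c hc l hl
    have hz : l.1.1 ∈ (φ.flatten.map Prod.fst).dedup :=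
      List.mem_dedup.2 (List.count_pos_iff.1 (by unfold occCount at hj; omega))
    exact oneInThree_cycleClauses_iff.1 (h.2 _ hz) _ hj
  · rintro ⟨σ, h⟩
    refine ⟨σ ∘ Prod.fst, ?_⟩
    rw [tovey, oneInThree_append, oneInThree_flatMap, h_lift]
    exact ⟨h, fun z _ => oneInThree_cycleClauses_iff.2 fun _ _ => rfl⟩
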